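/- arXiv:2605.11116 — 6 statements merged into one kernel-verified Lean document; each statement's English description precedes it below -/
import Mathlib

section
/- Let N ≥ 1, let w⁻ ∈ Δ^N with w⁻_i > 0 for all i, let g ∈ ℝ^N, and let ε > 0. Define the exponential tilt w_i(λ) = w⁻_i exp(−λ g_i)/Z(λ) with Z(λ) = ∑_j w⁻_j exp(−λ g_j). Suppose λ ≥ 0 satisfies either (λ = 0 and ∑_i w⁻_i g_i ≤ ε²) or (λ > 0 and ∑_i w_i(λ) g_i = ε²). Then w(λ) minimizes D(w‖w⁻) over the feasible set C = {w ∈ Δ^N : ∑_i w_i g_i ≤ ε²}; that is, D(w‖w⁻) ≥ D(w(λ)‖w⁻) for every w ∈ C. -/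
/-- Pointwise Gibbs inequality: `a - b ≤ a * log (a / b)` for `a ≥ 0`, `b > 0`. -/
lemma kl_pointwise (a b : ℝ) (ha : 0 ≤ a) (hb : 0 < b) :
    a - b ≤ a * Real.log (a / b) := by
  rcases eq_or_lt_of_le ha with h | h
  · simp [← h]; linarith
  · have h1 : Real.log (b / a) ≤ b / a - 1 := Real.log_le_sub_one_of_pos (by positivity)
    have h2 : Real.log (a / b) = - Real.log (b / a) := by
      rw [← Real.log_inv]; congr 1; field_simp
    have h3 := mul_le_mul_of_nonneg_left h1 h.le
    have h4 : a * (b / a - 1) = b - a := by field_simp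
    rw [h2]; nlinarith

/-- if `λ ≥ 0` satisfies either (`λ = 0` and the prior is feasible)
or (`λ > 0` and the tilted weights meet the constraint with equality), then the
exponential tilt `w(λ)` minimizes `D(w‖w⁻)` over the feasible set `C`. -/
theorem exponential_tilt_minimizes_kl
    (N : ℕ) (hN : 1 ≤ N) (wm g : Fin N → ℝ)
    (hwm_pos : ∀ i, 0 < wm i) (hwm_sum : ∑ i, wm i = 1)
    (ε : ℝ) (hε : 0 < ε)
    (l : ℝ) (hl : 0 ≤ l)
    (wl : Fin N → ℝ)
    (hwl : ∀ i, wl i = wm i * Real.exp (-l * g i) / ∑ j, wm j * Real.exp (-l * g j))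
    (hcase : (l = 0 ∧ ∑ i, wm i * g i ≤ ε ^ 2) ∨ (0 < l ∧ ∑ i, wl i * g i = ε ^ 2)) :
    ((∀ i, 0 ≤ wl i) ∧ ∑ i, wl i = 1 ∧ ∑ i, wl i * g i ≤ ε ^ 2) ∧
    ∀ w : Fin N → ℝ, (∀ i, 0 ≤ w i) → ∑ i, w i = 1 → ∑ i, w i * g i ≤ ε ^ 2 →
      ∑ i, wl i * Real.log (wl i / wm i) ≤ ∑ i, w i * Real.log (w i / wm i) := by
  have hne : Nonempty (Fin N) := ⟨⟨0, hN⟩⟩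
  set Z : ℝ := ∑ j, wm j * Real.exp (-l * g j) with hZdef
  have hZ : 0 < Z := Finset.sum_pos (fun i _ => mul_pos (hwm_pos i) (Real.exp_pos _)) Finset.univ_nonempty
  have hwl_pos : ∀ i, 0 < wl i := fun i => by
    rw [hwl i]; exact div_pos (mul_pos (hwm_pos i) (Real.exp_pos _)) hZ
  have hwl_sum : ∑ i, wl i = 1 := by
    have : ∑ i, wl i = (∑ i, wm i * Real.exp (-l * g i)) / Z := by
      rw [Finset.sum_div]; exact Finset.sum_congr rfl fun i _ => hwl i
    rw [this, ← hZdef, div_self hZ.ne']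
  -- log ratio formula
  have hlog : ∀ i, Real.log (wl i / wm i) = -l * g i - Real.log Z := by
    intro i
    have hr : wl i / wm i = Real.exp (-l * g i) / Z := by
      have h1 := (hwm_pos i).ne'
      have h2 := hZ.ne'
      rw [hwl i]; field_simp
    rw [hr, Real.log_div (Real.exp_ne_zero _) hZ.ne', Real.log_exp]
  -- feasibility of wl
  have hwl_feas : ∑ i, wl i * g i ≤ ε ^ 2 := by
    rcases hcase with ⟨hl0, hfeas⟩ | ⟨_, heq⟩
    · have hZ1 : Z = 1 := by
        rw [hZdef]
        simp only [hl0, neg_zero, zero_mul, Real.exp_zero, mul_one]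
        exact hwm_sum
      have : ∀ i, wl i = wm i := fun i => by
        rw [hwl i, hZ1]
        simp [hl0]
      calc ∑ i, wl i * g i = ∑ i, wm i * g i :=
            Finset.sum_congr rfl fun i _ => by rw [this i]
        _ ≤ ε ^ 2 := hfeas
    · exact heq.le
  refine ⟨⟨fun i => (hwl_pos i).le, hwl_sum, hwl_feas⟩, ?_⟩
  intro w hw hwsum hwfeas
  -- decomposition: ∑ w log(w/wm) = ∑ w log(w/wl) + ∑ w * (-l*g - log Z)
  have hdecomp : ∑ i, w i * Real.log (w i / wm i)
      = ∑ i, w i * Real.log (w i / wl i) + ∑ i, w i * (-l * g i - Real.log Z) := by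
    rw [← Finset.sum_add_distrib]
    refine Finset.sum_congr rfl fun i _ => ?_
    rcases eq_or_lt_of_le (hw i) with h | h
    · simp [← h]
    · rw [← hlog i, Real.log_div h.ne' (hwm_pos i).ne',
        Real.log_div h.ne' (hwl_pos i).ne',
        Real.log_div (hwl_pos i).ne' (hwm_pos i).ne']
      ring
  have hsum2 : ∀ v : Fin N → ℝ, (∑ i, v i = 1) →
      ∑ i, v i * (-l * g i - Real.log Z) = -l * (∑ i, v i * g i) - Real.log Z := by
    intro v hv
    rw [Finset.mul_sum]
    have : ∑ i, v i * (-l * g i - Real.log Z)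
        = ∑ i, (-l * (v i * g i) - v i * Real.log Z) := by
      refine Finset.sum_congr rfl fun i _ => by ring
    rw [this, Finset.sum_sub_distrib, ← Finset.sum_mul, hv, one_mul]
  -- value at wl
  have hval : ∑ i, wl i * Real.log (wl i / wm i)
      = -l * (∑ i, wl i * g i) - Real.log Z := by
    have : ∑ i, wl i * Real.log (wl i / wm i)
        = ∑ i, wl i * (-l * g i - Real.log Z) :=
      Finset.sum_congr rfl fun i _ => by rw [hlog i]
    rw [this, hsum2 wl hwl_sum]
  -- Gibbs: ∑ w log(w/wl) ≥ 0
  have hgibbs : 0 ≤ ∑ i, w i * Real.log (w i / wl i) := by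
    have h1 : ∑ i, (w i - wl i) ≤ ∑ i, w i * Real.log (w i / wl i) :=
      Finset.sum_le_sum fun i _ => kl_pointwise _ _ (hw i) (hwl_pos i)
    rwa [Finset.sum_sub_distrib, hwsum, hwl_sum, sub_self] at h1
  -- the slack term
  have hslack : -l * (∑ i, wl i * g i) ≤ -l * (∑ i, w i * g i) := by
    rcases hcase with ⟨hl0, _⟩ | ⟨hlp, heq⟩
    · simp [hl0]
    · rw [heq]
      have : l * (∑ i, w i * g i) ≤ l * (ε ^ 2) :=
        mul_le_mul_of_nonneg_left hwfeas hl
      linarith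
  rw [hdecomp, hsum2 w hwsum, hval]
  linarith
end

section
/- Let N ≥ 1, let w⁻ ∈ Δ^N with w⁻_i > 0 for all i, let g ∈ ℝ^N, and let ε > 0 be such that the feasible set C = {w ∈ Δ^N : ∑_i w_i g_i ≤ ε²} is nonempty. Suppose the prior is infeasible, i.e. ∑_i w⁻_i g_i > ε². Then any minimizer w* of D(w‖w⁻) over C satisfies the constraint with equality: ∑_i w*_i g_i = ε², and in particular ∑_i w*_i g_i = ε² < ∑_i w⁻_i g_i (monotone concentration toward the target). -/
open Real

/-- Per-term Gibbs: for `c > 0`, `x ≥ 0`, `x - c ≤ x * log (x / c)`,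
with strict inequality unless `x = c`. -/
lemma term_gibbs {x c : ℝ} (hx : 0 ≤ x) (hc : 0 < c) :
    x - c ≤ x * Real.log (x / c) ∧ (x ≠ c → x - c < x * Real.log (x / c)) := by
  rcases eq_or_lt_of_le hx with h0 | hx0
  · constructor
    · simp [← h0]; linarith
    · intro _; simp [← h0]; linarith
  · have hcx : 0 < c / x := div_pos hc hx0
    have hle : Real.log (c / x) ≤ c / x - 1 := Real.log_le_sub_one_of_pos hcx
    have hkey : x * Real.log (x / c) = -(x * Real.log (c / x)) := by
      rw [show x / c = (c / x)⁻¹ by rw [inv_div], Real.log_inv]; ring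
    constructor
    · have := mul_le_mul_of_nonneg_left hle hx0.le
      rw [hkey]
      have : x * Real.log (c / x) ≤ c - x := by
        calc x * Real.log (c / x) ≤ x * (c / x - 1) := mul_le_mul_of_nonneg_left hle hx0.le
          _ = c - x := by field_simp
      linarith
    · intro hne
      have hne1 : c / x ≠ 1 := by
        intro h; apply hne; field_simp at h; linarith
      have hlt : Real.log (c / x) < c / x - 1 := Real.log_lt_sub_one_of_pos hcx hne1
      have : x * Real.log (c / x) < c - x := by
        calc x * Real.log (c / x) < x * (c / x - 1) := by
              exact mul_lt_mul_of_pos_left hlt hx0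
          _ = c - x := by field_simp
      rw [hkey]; linarith

/-- if the prior is infeasible (`∑ i, w⁻ i * g i > ε²`) and the
feasible set is nonempty, then any minimizer `w*` of the KL divergence over the
feasible set satisfies the constraint with equality:
`∑ i, w* i * g i = ε² < ∑ i, w⁻ i * g i`. -/
theorem kl_minimizer_constraint_active
    (N : ℕ) (hN : 1 ≤ N) (wm g : Fin N → ℝ)
    (hwm_pos : ∀ i, 0 < wm i) (hwm_sum : ∑ i, wm i = 1)
    (ε : ℝ) (hε : 0 < ε)
    (hC : ∃ w : Fin N → ℝ, (∀ i, 0 ≤ w i) ∧ ∑ i, w i = 1 ∧ ∑ i, w i * g i ≤ ε ^ 2)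
    (hinfeas : ε ^ 2 < ∑ i, wm i * g i)
    (ws : Fin N → ℝ)
    (hws_mem : (∀ i, 0 ≤ ws i) ∧ ∑ i, ws i = 1 ∧ ∑ i, ws i * g i ≤ ε ^ 2)
    (hws_min : ∀ w : Fin N → ℝ, (∀ i, 0 ≤ w i) → ∑ i, w i = 1 → ∑ i, w i * g i ≤ ε ^ 2 →
      ∑ i, ws i * Real.log (ws i / wm i) ≤ ∑ i, w i * Real.log (w i / wm i)) :
    ∑ i, ws i * g i = ε ^ 2 ∧ ∑ i, ws i * g i < ∑ i, wm i * g i := by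
  obtain ⟨hws_nonneg, hws_sum, hws_feas⟩ := hws_mem
  set S := ∑ i, ws i * g i with hS
  set M := ∑ i, wm i * g i with hM
  suffices hact : S = ε ^ 2 by
    exact ⟨hact, by rw [hact]; exact hinfeas⟩
  by_contra hne
  have hlt : S < ε ^ 2 := lt_of_le_of_ne hws_feas hne
  have hMS : S < M := lt_trans hlt hinfeas
  set t : ℝ := (ε ^ 2 - S) / (M - S) with ht
  have ht0 : 0 < t := div_pos (by linarith) (by linarith)
  have ht1 : t < 1 := by
    rw [ht, div_lt_one (by linarith)]; linarith
  set w : Fin N → ℝ := fun i => (1 - t) * ws i + t * wm i with hw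
  have hw_nonneg : ∀ i, 0 ≤ w i := fun i =>
    add_nonneg (mul_nonneg (by linarith) (hws_nonneg i)) (mul_nonneg ht0.le (hwm_pos i).le)
  have hw_sum : ∑ i, w i = 1 := by
    simp only [hw, Finset.sum_add_distrib, ← Finset.mul_sum, hws_sum, hwm_sum]; ring
  have hw_feas : ∑ i, w i * g i = ε ^ 2 := by
    have : ∑ i, w i * g i = (1 - t) * S + t * M := by
      simp only [hw, hS, hM, Finset.mul_sum, ← Finset.sum_add_distrib]
      congr 1; ext i; ring
    have hMS' : M - S ≠ 0 := by linarith
    have htMS : t * (M - S) = ε ^ 2 - S := by rw [ht]; field_simp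
    rw [this]; nlinarith [htMS]
  -- convexity: per-term bound
  have hterm : ∀ i, w i * Real.log (w i / wm i) ≤ (1 - t) * (ws i * Real.log (ws i / wm i)) := by
    intro i
    have hc := hwm_pos i
    have ha : (0:ℝ) ≤ ws i / wm i := div_nonneg (hws_nonneg i) hc.le
    have hb : (0:ℝ) ≤ (1:ℝ) := zero_le_one
    have hconv := Real.convexOn_mul_log.2 (Set.mem_Ici.mpr ha) (Set.mem_Ici.mpr hb)
      (by linarith : (0:ℝ) ≤ 1 - t) ht0.le (by ring : (1 - t) + t = 1)
    simp only [Real.log_one, mul_zero, mul_one, add_zero, smul_eq_mul] at hconv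
    have hwi : w i / wm i = (1 - t) * (ws i / wm i) + t := by
      rw [hw]; field_simp
    have := mul_le_mul_of_nonneg_left hconv hc.le
    calc w i * Real.log (w i / wm i)
        = wm i * ((w i / wm i) * Real.log (w i / wm i)) := by field_simp
      _ ≤ wm i * ((1 - t) * (ws i / wm i * Real.log (ws i / wm i))) := by
          rw [hwi]; exact this
      _ = (1 - t) * (ws i * Real.log (ws i / wm i)) := by field_simp
  set D := ∑ i, ws i * Real.log (ws i / wm i) with hD
  have hmin := hws_min w hw_nonneg hw_sum (le_of_eq hw_feas)
  have hDle : D ≤ (1 - t) * D := by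
    calc D ≤ ∑ i, w i * Real.log (w i / wm i) := hmin
      _ ≤ ∑ i, (1 - t) * (ws i * Real.log (ws i / wm i)) := Finset.sum_le_sum fun i _ => hterm i
      _ = (1 - t) * D := by rw [← Finset.mul_sum]
  have hDnonpos : D ≤ 0 := by nlinarith
  -- Gibbs: D ≥ 0, with strictness unless ws = wm
  have hgibbs : ∀ i, ws i - wm i ≤ ws i * Real.log (ws i / wm i) :=
    fun i => (term_gibbs (hws_nonneg i) (hwm_pos i)).1
  have hsum0 : ∑ i, (ws i - wm i) = 0 := by
    rw [Finset.sum_sub_distrib, hws_sum, hwm_sum]; ring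
  have hD0 : 0 ≤ D := by
    calc (0:ℝ) = ∑ i, (ws i - wm i) := hsum0.symm
      _ ≤ D := Finset.sum_le_sum fun i _ => hgibbs i
  have hDeq : D = 0 := le_antisymm hDnonpos hD0
  -- equality forces ws = wm
  have heq : ∀ i, ws i = wm i := by
    by_contra hne2
    push_neg at hne2
    obtain ⟨j, hj⟩ := hne2
    have hstrict : ∑ i, (ws i - wm i) < D := by
      apply Finset.sum_lt_sum (fun i _ => hgibbs i)
      exact ⟨j, Finset.mem_univ j, (term_gibbs (hws_nonneg j) (hwm_pos j)).2 hj⟩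
    rw [hsum0, hDeq] at hstrict
    exact lt_irrefl 0 hstrict
  have : S = M := by
    rw [hS, hM]; exact Finset.sum_congr rfl fun i _ => by rw [heq i]
  linarith
end

section
/- Let N ≥ 1, let w⁻ ∈ Δ^N with w⁻_i > 0 for all i, let g ∈ ℝ^N, and let ε > 0. Let λ ≥ 0 and let w(λ) be the exponential tilt w_i(λ) = w⁻_i exp(−λ g_i)/Z(λ), Z(λ) = ∑_j w⁻_j exp(−λ g_j), and suppose ∑_i w_i(λ) g_i = ε². Then for every w in the feasible set C = {w ∈ Δ^N : ∑_i w_i g_i ≤ ε²} the Pythagorean inequality for the I-projection onto a half-space holds: D(w‖w⁻) ≥ D(w‖w(λ)) + D(w(λ)‖w⁻). -/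
/-!
The log-likelihood ratio of the tilt against its base is affine in the cost:
`log (w(λ)ᵢ / w⁻ᵢ) = -λ gᵢ - log Z(λ)`. Hence for any distribution `w`,
`D(w‖w⁻) - D(w‖w(λ)) = -λ ∑ wᵢ gᵢ - log Z(λ)`, which for `w = w(λ)` is `D(w(λ)‖w⁻)`.
Since `λ ≥ 0` and `∑ wᵢ gᵢ ≤ ε² = ∑ w(λ)ᵢ gᵢ`, this difference is at least `D(w(λ)‖w⁻)`.
-/

open Finset Real

namespace ExpTilt

variable {ι : Type*} [Fintype ι]

noncomputable def expTilt (q g : ι → ℝ) (l : ℝ) (i : ι) : ℝ :=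
  q i * exp (-l * g i) / ∑ j, q j * exp (-l * g j)

lemma mul_log_div_sub_mul_log_div {a p q : ℝ} (ha : 0 ≤ a) (hp : 0 < p) (hq : 0 < q) :
    a * log (a / q) - a * log (a / p) = a * log (p / q) := by
  rcases ha.eq_or_lt with rfl | ha
  · simp
  rw [log_div ha.ne' hq.ne', log_div ha.ne' hp.ne', log_div hp.ne' hq.ne']
  ring

variable [Nonempty ι] {q : ι → ℝ} (hq : ∀ i, 0 < q i) (g : ι → ℝ) (l : ℝ)
include hq

lemma partition_pos : 0 < ∑ j, q j * exp (-l * g j) :=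
  Finset.sum_pos (fun i _ => mul_pos (hq i) (exp_pos _)) univ_nonempty

lemma expTilt_pos (i : ι) : 0 < expTilt q g l i :=
  div_pos (mul_pos (hq i) (exp_pos _)) (partition_pos hq g l)

lemma sum_expTilt : ∑ i, expTilt q g l i = 1 := by
  simp only [expTilt, ← Finset.sum_div, div_self (partition_pos hq g l).ne']

lemma log_expTilt_div (i : ι) :
    log (expTilt q g l i / q i) = -l * g i - log (∑ j, q j * exp (-l * g j)) := by
  have hratio : expTilt q g l i / q i = exp (-l * g i) / ∑ j, q j * exp (-l * g j) := by
    rw [expTilt]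
    field_simp [(hq i).ne']
  rw [hratio, log_div (exp_ne_zero _) (partition_pos hq g l).ne', log_exp]

lemma sum_mul_log_expTilt_div {w : ι → ℝ} (hw : ∑ i, w i = 1) :
    ∑ i, w i * log (expTilt q g l i / q i) =
      -l * ∑ i, w i * g i - log (∑ j, q j * exp (-l * g j)) := by
  simp_rw [log_expTilt_div hq, mul_sub, Finset.sum_sub_distrib, ← Finset.sum_mul, hw,
    Finset.mul_sum, one_mul, mul_left_comm]

theorem sum_mul_log_div_expTilt_add_le (hl : 0 ≤ l) {c : ℝ}
    (hactive : ∑ i, expTilt q g l i * g i = c) {w : ι → ℝ} (hw : ∀ i, 0 ≤ w i)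
    (hw_sum : ∑ i, w i = 1) (hw_feas : ∑ i, w i * g i ≤ c) :
    ∑ i, w i * log (w i / expTilt q g l i) + ∑ i, expTilt q g l i * log (expTilt q g l i / q i) ≤
      ∑ i, w i * log (w i / q i) := by
  have hdiff : ∑ i, w i * log (w i / q i) - ∑ i, w i * log (w i / expTilt q g l i) =
      ∑ i, w i * log (expTilt q g l i / q i) := by
    rw [← Finset.sum_sub_distrib]
    exact Finset.sum_congr rfl fun i _ =>
      mul_log_div_sub_mul_log_div (hw i) (expTilt_pos hq g l i) (hq i)
  rw [sum_mul_log_expTilt_div hq g l hw_sum] at hdiff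
  rw [sum_mul_log_expTilt_div hq g l (sum_expTilt hq g l), hactive]
  linarith [mul_le_mul_of_nonneg_left hw_feas hl]

end ExpTilt

open ExpTilt in
theorem iprojection_pythagorean_inequality_general
    (N : ℕ) (hN : 1 ≤ N) (wm g : Fin N → ℝ)
    (hwm_pos : ∀ i, 0 < wm i)
    (ε : ℝ)
    (l : ℝ) (hl : 0 ≤ l)
    (wl : Fin N → ℝ)
    (hwl : ∀ i, wl i = wm i * Real.exp (-l * g i) / ∑ j, wm j * Real.exp (-l * g j))
    (hactive : ∑ i, wl i * g i = ε ^ 2) :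
    ∀ w : Fin N → ℝ, (∀ i, 0 ≤ w i) → ∑ i, w i = 1 → ∑ i, w i * g i ≤ ε ^ 2 →
      ∑ i, w i * Real.log (w i / wl i) + ∑ i, wl i * Real.log (wl i / wm i) ≤
        ∑ i, w i * Real.log (w i / wm i) := by
  have : Nonempty (Fin N) := ⟨⟨0, hN⟩⟩
  obtain rfl : wl = expTilt wm g l := funext hwl
  exact fun w hw hw_sum hw_feas =>
    sum_mul_log_div_expTilt_add_le hwm_pos g l hl hactive hw hw_sum hw_feas

/-- Pythagorean inequality for the I-projection onto a half-space:
if the exponential tilt `w(λ)` (with `λ ≥ 0`) meets the constraint with equality,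
then for every feasible `w`, `D(w‖w⁻) ≥ D(w‖w(λ)) + D(w(λ)‖w⁻)`. -/
theorem iprojection_pythagorean_inequality
    (N : ℕ) (hN : 1 ≤ N) (wm g : Fin N → ℝ)
    (hwm_pos : ∀ i, 0 < wm i) (hwm_sum : ∑ i, wm i = 1)
    (ε : ℝ) (hε : 0 < ε)
    (l : ℝ) (hl : 0 ≤ l)
    (wl : Fin N → ℝ)
    (hwl : ∀ i, wl i = wm i * Real.exp (-l * g i) / ∑ j, wm j * Real.exp (-l * g j))
    (hactive : ∑ i, wl i * g i = ε ^ 2) :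
    ∀ w : Fin N → ℝ, (∀ i, 0 ≤ w i) → ∑ i, w i = 1 → ∑ i, w i * g i ≤ ε ^ 2 →
      ∑ i, w i * Real.log (w i / wl i) + ∑ i, wl i * Real.log (wl i / wm i) ≤
        ∑ i, w i * Real.log (w i / wm i) :=
  iprojection_pythagorean_inequality_general N hN wm g hwm_pos ε l hl wl hwl hactive
end

section
/- Let n, N ≥ 1, let M_1, …, M_N be positive semidefinite real symmetric n×n matrices with trace(M_i) ≤ C for all i and some C > 0, and for w ∈ ℝ^N define F(w) = ∑_i w_i M_i. Let λ_min > 0 and suppose w, w' ∈ Δ^N are such that both F(w) and F(w') are positive definite with smallest eigenvalue at least λ_min (equivalently F(w) ⪰ λ_min I and F(w') ⪰ λ_min I). Then |log det F(w') − log det F(w)| ≤ (C/λ_min) · ∑_i |w'_i − w_i|. -/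
/-
`log det` is concave with gradient `A⁻¹`: for positive definite `A`, `B`,
`log det B - log det A ≤ tr (A⁻¹ (B - A))`, which is `log x ≤ x - 1` applied to the eigenvalues
of `A^{-1/2} B A^{-1/2}`. Since `F` is linear,
`tr (F(w)⁻¹ (F(w') - F(w))) = ∑ i, (w'ᵢ - wᵢ) tr (F(w)⁻¹ Mᵢ)`, and
`0 ≤ tr (F(w)⁻¹ Mᵢ) ≤ tr Mᵢ / λmin ≤ C / λmin` because `F(w) ⪰ λmin I` gives
`F(w)⁻¹ ⪯ λmin⁻¹ I`. Exchanging `w` and `w'` bounds the other side.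
-/

open Matrix
open scoped MatrixOrder

namespace Matrix

variable {n : Type*} [Fintype n] [DecidableEq n]

lemma PosSemidef.trace_mul_nonneg {A B : Matrix n n ℝ} (hA : A.PosSemidef) (hB : B.PosSemidef) :
    0 ≤ (A * B).trace := by
  set T := CFC.sqrt B
  have hT : T.IsHermitian := (CFC.sqrt_nonneg B).posSemidef.isHermitian
  have hTT : T * T = B := CFC.sqrt_mul_sqrt_self B hB.nonneg
  rw [← hTT, ← Matrix.mul_assoc, trace_mul_cycle]
  simpa only [hT.eq] using (hA.conjTranspose_mul_mul_same T).trace_nonneg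

omit [Fintype n] in
lemma PosDef.of_smul_one_le {A : Matrix n n ℝ} {c : ℝ} (hc : 0 < c) (h : c • 1 ≤ A) :
    A.PosDef := by
  simpa using (PosDef.one.smul hc).add_posSemidef h

lemma smul_one_le_of_forall_le_dotProduct_mulVec {A : Matrix n n ℝ} {c : ℝ} (hA : A.IsHermitian)
    (h : ∀ x : n → ℝ, c * ∑ k, x k ^ 2 ≤ x ⬝ᵥ A *ᵥ x) : c • 1 ≤ A := by
  refine le_iff.mpr <| PosSemidef.of_dotProduct_mulVec_nonneg
    (hA.sub (isHermitian_one.smul (.all c))) fun x => ?_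
  have := h x
  simp only [star_trivial, sub_mulVec, dotProduct_sub, smul_mulVec, one_mulVec, dotProduct_smul]
  simp only [dotProduct, smul_eq_mul, sq] at *
  linarith

lemma inv_le_inv_smul_one_of_smul_one_le {A : Matrix n n ℝ} {c : ℝ} (hc : 0 < c)
    (h : c • 1 ≤ A) : A⁻¹ ≤ c⁻¹ • 1 := by
  have hA := PosDef.of_smul_one_le hc h
  have hAinv : A⁻¹.IsHermitian := hA.isHermitian.inv
  have key : c • (c⁻¹ • 1 - A⁻¹) =
      (1 - c • A⁻¹)ᴴ * 1 * (1 - c • A⁻¹) + c • (A⁻¹ᴴ * (A - c • 1) * A⁻¹) := by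
    simp only [conjTranspose_sub, conjTranspose_smul, conjTranspose_one, hAinv.eq, star_trivial,
      mul_one, mul_sub, sub_mul, Matrix.mul_smul, Matrix.smul_mul, one_mul,
      nonsing_inv_mul _ hA.det_pos.ne'.isUnit, smul_sub, smul_smul, mul_inv_cancel₀ hc.ne']
    module
  have hpos : 0 ≤ c • (c⁻¹ • 1 - A⁻¹) := by
    rw [key]
    exact add_nonneg (PosSemidef.one.conjTranspose_mul_mul_same _).nonneg
      (smul_nonneg hc.le ((le_iff.mp h).conjTranspose_mul_mul_same _).nonneg)
  simpa [smul_smul, inv_mul_cancel₀ hc.ne'] using smul_nonneg (inv_nonneg.mpr hc.le) hpos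

lemma trace_inv_mul_le {A P : Matrix n n ℝ} {c : ℝ} (hc : 0 < c) (h : c • 1 ≤ A)
    (hP : P.PosSemidef) : (A⁻¹ * P).trace ≤ c⁻¹ * P.trace := by
  have := (le_iff.mp (inv_le_inv_smul_one_of_smul_one_le hc h)).trace_mul_nonneg hP
  rwa [sub_mul, trace_sub, smul_mul, one_mul, trace_smul, smul_eq_mul, sub_nonneg] at this

lemma PosDef.log_det_le_trace_sub_card {X : Matrix n n ℝ} (hX : X.PosDef) :
    Real.log X.det ≤ X.trace - Fintype.card n := by
  have hev := hX.eigenvalues_pos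
  rw [hX.isHermitian.det_eq_prod_eigenvalues, hX.isHermitian.trace_eq_sum_eigenvalues]
  simp only [RCLike.ofReal_real_eq_id, id_eq]
  rw [Real.log_prod fun i _ => (hev i).ne']
  calc ∑ i, Real.log (hX.isHermitian.eigenvalues i)
      ≤ ∑ i, (hX.isHermitian.eigenvalues i - 1) :=
        Finset.sum_le_sum fun i _ => Real.log_le_sub_one_of_pos (hev i)
    _ = _ := by simp [Finset.sum_sub_distrib]

lemma PosDef.log_det_sub_log_det_le {A B : Matrix n n ℝ} (hA : A.PosDef) (hB : B.PosDef) :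
    Real.log B.det - Real.log A.det ≤ (A⁻¹ * (B - A)).trace := by
  set S := CFC.sqrt A⁻¹
  have hS : S.IsHermitian := (CFC.sqrt_nonneg _).posSemidef.isHermitian
  have hSS : S * S = A⁻¹ := CFC.sqrt_mul_sqrt_self _ hA.inv.posSemidef.nonneg
  have hSu : IsUnit S := isUnit_of_mul_isUnit_left (hSS ▸ hA.inv.isUnit)
  have hX : (Sᴴ * B * S).PosDef :=
    hB.conjTranspose_mul_mul_same (mulVec_injective_iff_isUnit.mpr hSu)
  have hdet : (Sᴴ * B * S).det = B.det / A.det := by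
    rw [hS.eq, det_mul, det_mul, mul_right_comm, ← det_mul, hSS, det_nonsing_inv,
      Ring.inverse_eq_inv, inv_mul_eq_div]
  have htr : (Sᴴ * B * S).trace = (A⁻¹ * B).trace := by
    rw [hS.eq, trace_mul_cycle, hSS]
  have := hX.log_det_le_trace_sub_card
  rw [hdet, Real.log_div hB.det_pos.ne' hA.det_pos.ne', htr] at this
  rwa [mul_sub, trace_sub, nonsing_inv_mul _ hA.det_pos.ne'.isUnit, trace_one]

theorem log_det_sum_smul_sub_le {ι : Type*} [Fintype ι] {M : ι → Matrix n n ℝ} {C c : ℝ}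
    (hM : ∀ i, (M i).PosSemidef) (htr : ∀ i, (M i).trace ≤ C) (hc : 0 < c) {w w' : ι → ℝ}
    (hw : c • 1 ≤ ∑ i, w i • M i) (hw' : (∑ i, w' i • M i).PosDef) :
    Real.log (∑ i, w' i • M i).det - Real.log (∑ i, w i • M i).det ≤
      C / c * ∑ i, |w' i - w i| := by
  set A := ∑ i, w i • M i
  have hA := PosDef.of_smul_one_le hc hw
  have hdiff :
      (A⁻¹ * (∑ i, w' i • M i - A)).trace = ∑ i, (w' i - w i) * (A⁻¹ * M i).trace := by
    simp only [A, ← Finset.sum_sub_distrib, ← sub_smul, Finset.mul_sum, trace_sum,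
      Matrix.mul_smul, trace_smul, smul_eq_mul]
  have hcoeff : ∀ i, (w' i - w i) * (A⁻¹ * M i).trace ≤ |w' i - w i| * (C / c) := fun i =>
    calc (w' i - w i) * (A⁻¹ * M i).trace ≤ |w' i - w i| * (A⁻¹ * M i).trace :=
          mul_le_mul_of_nonneg_right (le_abs_self _) (hA.inv.posSemidef.trace_mul_nonneg (hM i))
      _ ≤ |w' i - w i| * (C / c) := by
          gcongr
          calc (A⁻¹ * M i).trace ≤ c⁻¹ * (M i).trace := trace_inv_mul_le hc hw (hM i)
            _ ≤ C / c := by rw [div_eq_inv_mul]; gcongr; exact htr i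
  calc _ ≤ (A⁻¹ * (∑ i, w' i • M i - A)).trace := hA.log_det_sub_log_det_le hw'
    _ = ∑ i, (w' i - w i) * (A⁻¹ * M i).trace := hdiff
    _ ≤ ∑ i, |w' i - w i| * (C / c) := Finset.sum_le_sum fun i _ => hcoeff i
    _ = C / c * ∑ i, |w' i - w i| := by rw [Finset.mul_sum]; simp_rw [mul_comm]

end Matrix

theorem logdet_sensitivity_bound_general
    (n N : ℕ)
    (M : Fin N → Matrix (Fin n) (Fin n) ℝ)
    (C : ℝ)
    (hM : ∀ i, (M i).PosSemidef) (htr : ∀ i, (M i).trace ≤ C)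
    (lmin : ℝ) (hlmin : 0 < lmin)
    (w w' : Fin N → ℝ)
    (hFw : ∀ x : Fin n → ℝ, lmin * (∑ k, x k ^ 2) ≤ x ⬝ᵥ (∑ i, w i • M i).mulVec x)
    (hFw' : ∀ x : Fin n → ℝ, lmin * (∑ k, x k ^ 2) ≤ x ⬝ᵥ (∑ i, w' i • M i).mulVec x) :
    |Real.log (∑ i, w' i • M i).det - Real.log (∑ i, w i • M i).det| ≤
      (C / lmin) * ∑ i, |w' i - w i| := by
  have hF : ∀ v : Fin N → ℝ, (∑ i, v i • M i).IsHermitian := fun v =>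
    isSelfAdjoint_sum _ fun i _ => (hM i).isHermitian.smul (.all (v i))
  have hlow := smul_one_le_of_forall_le_dotProduct_mulVec (hF w) hFw
  have hlow' := smul_one_le_of_forall_le_dotProduct_mulVec (hF w') hFw'
  rw [abs_sub_le_iff]
  refine ⟨log_det_sum_smul_sub_le hM htr hlmin hlow (.of_smul_one_le hlmin hlow'), ?_⟩
  simpa only [abs_sub_comm] using
    log_det_sum_smul_sub_le hM htr hlmin hlow' (.of_smul_one_le hlmin hlow)

/-- abstract sensitivity of the D-optimal objective: if each `M i`
is PSD with `trace (M i) ≤ C`, `F v = ∑ i, v i • M i`, and both `F w` and `F w'`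
have smallest eigenvalue at least `λmin > 0` (as quadratic forms), then
`|log det F w' − log det F w| ≤ (C/λmin) * ‖w' − w‖₁`. -/
theorem logdet_sensitivity_bound
    (n N : ℕ) (hn : 1 ≤ n) (hN : 1 ≤ N)
    (M : Fin N → Matrix (Fin n) (Fin n) ℝ)
    (C : ℝ) (hC : 0 < C)
    (hM : ∀ i, (M i).PosSemidef) (htr : ∀ i, (M i).trace ≤ C)
    (lmin : ℝ) (hlmin : 0 < lmin)
    (w w' : Fin N → ℝ)
    (hw : (∀ i, 0 ≤ w i) ∧ ∑ i, w i = 1)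
    (hw' : (∀ i, 0 ≤ w' i) ∧ ∑ i, w' i = 1)
    (hFw : ∀ x : Fin n → ℝ, lmin * (∑ k, x k ^ 2) ≤ x ⬝ᵥ (∑ i, w i • M i).mulVec x)
    (hFw' : ∀ x : Fin n → ℝ, lmin * (∑ k, x k ^ 2) ≤ x ⬝ᵥ (∑ i, w' i • M i).mulVec x) :
    |Real.log (∑ i, w' i • M i).det - Real.log (∑ i, w i • M i).det| ≤
      (C / lmin) * ∑ i, |w' i - w i| :=
  logdet_sensitivity_bound_general n N M C hM htr lmin hlmin w w' hFw hFw'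
end

section
/- Let A and B be positive definite real symmetric n×n matrices. Then log det A − log det B = ∫₀¹ trace( (t·A + (1−t)·B)⁻¹ · (A − B) ) dt. -/
/-!
Along the segment `s ↦ B + s • (A - B)`, which stays in the positive definite cone, Jacobi's
formula `(d/ds) det (M + s • C) = det M · tr (M⁻¹ C)` gives
`(d/ds) log det (B + s • (A - B)) = tr ((B + s • (A - B))⁻¹ (A - B))`, and the identity is the
fundamental theorem of calculus on `[0, 1]`.
-/

open Matrix intervalIntegral

namespace Matrix

theorem PosDef.smul_add_one_sub_smul {n : Type*} {A B : Matrix n n ℝ} (hA : A.PosDef)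
    (hB : B.PosDef) {t : ℝ} (h0 : 0 ≤ t) (h1 : t ≤ 1) : (t • A + (1 - t) • B).PosDef := by
  rcases h1.lt_or_eq with h1 | rfl
  · exact (hB.smul (sub_pos.mpr h1)).posSemidef_add (hA.posSemidef.smul h0)
  · simpa using hA

variable {n : Type*} [Fintype n] [DecidableEq n]

section Jacobi

variable {𝕜 : Type*} [NontriviallyNormedField 𝕜]

open Polynomial in
theorem hasDerivAt_det_one_add_smul (D : Matrix n n 𝕜) :
    HasDerivAt (fun s : 𝕜 => (1 + s • D).det) D.trace 0 := by
  have h := (det (1 + (X : 𝕜[X]) • D.map C)).hasDerivAt 0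
  rw [derivative_det_one_add_X_smul] at h
  convert h using 2 with s
  simp [eval_det, ← smul_eq_mul_diagonal]

theorem hasDerivAt_det_add_smul (M C : Matrix n n 𝕜) {t : 𝕜} (ht : IsUnit (M + t • C).det) :
    HasDerivAt (fun s : 𝕜 => (M + s • C).det)
      ((M + t • C).det * ((M + t • C)⁻¹ * C).trace) t := by
  set N := M + t • C with hN
  have hfactor : ∀ s : 𝕜, M + s • C = N * (1 + (s - t) • (N⁻¹ * C)) := fun s => by
    rw [Matrix.mul_add, Matrix.mul_one, mul_smul_comm, ← Matrix.mul_assoc,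
      mul_nonsing_inv _ ht, Matrix.one_mul, sub_smul, hN]
    abel
  have hshift : HasDerivAt (fun s : 𝕜 => (1 + (s - t) • (N⁻¹ * C)).det) (N⁻¹ * C).trace t :=
    HasDerivAt.comp_sub_const (f := fun s : 𝕜 => (1 + s • (N⁻¹ * C)).det) t t
      (by rw [sub_self]; exact hasDerivAt_det_one_add_smul _)
  simpa only [hfactor, det_mul] using hshift.const_mul N.det

end Jacobi

theorem hasDerivAt_log_det_add_smul (M C : Matrix n n ℝ) {t : ℝ} (ht : (M + t • C).det ≠ 0) :
    HasDerivAt (fun s : ℝ => Real.log (M + s • C).det) ((M + t • C)⁻¹ * C).trace t := by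
  have h := (hasDerivAt_det_add_smul M C ht.isUnit).log ht
  rwa [mul_div_cancel_left₀ _ ht] at h

theorem _root_.ContinuousOn.matrix_nonsing_inv {K X : Type*} [Field K] [TopologicalSpace K]
    [IsTopologicalDivisionRing K] [TopologicalSpace X] {f : X → Matrix n n K} {s : Set X}
    (hf : ContinuousOn f s) (hdet : ∀ x ∈ s, (f x).det ≠ 0) :
    ContinuousOn (fun x => (f x)⁻¹) s := fun x hx =>
  (continuousAt_matrix_inv _ (by
    simpa only [Ring.inverse_eq_inv'] using continuousAt_inv₀ (hdet x hx))).comp_continuousWithinAt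
    (hf x hx)

end Matrix

/-- mean-value integral representation of the log-determinant
difference for positive definite real symmetric matrices:
`log det A − log det B = ∫₀¹ trace ((t•A + (1−t)•B)⁻¹ * (A − B)) dt`. -/
theorem logdet_diff_integral_repr
    (n : ℕ) (A B : Matrix (Fin n) (Fin n) ℝ)
    (hA : A.PosDef) (hB : B.PosDef) :
    Real.log A.det - Real.log B.det =
      ∫ t in (0:ℝ)..1, ((t • A + (1 - t) • B)⁻¹ * (A - B)).trace := by
  have hsegment : ∀ t : ℝ, t • A + (1 - t) • B = B + t • (A - B) := fun t => by
    rw [smul_sub, sub_smul, one_smul]; abel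
  have hdet : ∀ t ∈ Set.uIcc (0 : ℝ) 1, (B + t • (A - B)).det ≠ 0 := fun t ht => by
    rw [Set.uIcc_of_le zero_le_one] at ht
    exact hsegment t ▸ (hA.smul_add_one_sub_smul hB ht.1 ht.2).det_pos.ne'
  have hcont : ContinuousOn (fun t : ℝ => ((B + t • (A - B))⁻¹ * (A - B)).trace) (Set.uIcc 0 1) :=
    (continuous_id.matrix_mul continuous_const).matrix_trace.comp_continuousOn
      (ContinuousOn.matrix_nonsing_inv (by fun_prop) hdet)
  simp_rw [hsegment]
  rw [integral_eq_sub_of_hasDerivAt (fun t ht => hasDerivAt_log_det_add_smul B (A - B) (hdet t ht))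
    hcont.intervalIntegrable]
  simp
end

section
/- Let N ≥ 1, let w⁻ ∈ Δ^N with w⁻_i > 0 for all i, let g ∈ ℝ^N, let σ > 0, λ_min > 0, and for each i let M_i be the 2×2 matrix M_i = ∑_{r=1}^R (1/(σ²ρ_{r,i}⁴)) [[δy_{r,i}², −δx_{r,i}·δy_{r,i}], [−δx_{r,i}·δy_{r,i}, δx_{r,i}²]], where for each sensor index r and particle index i, (δx_{r,i}, δy_{r,i}) ∈ ℝ² is nonzero with ρ_{r,i} = ‖(δx_{r,i}, δy_{r,i})‖. Set K = max over all (r,i) of 1/ρ_{r,i}², and F(w) = ∑_i w_i M_i. If w, w' ∈ Δ^N are such that F(w) and F(w') both have smallest eigenvalue at least λ_min, then |log det F(w') − log det F(w)| ≤ (R·K/(λ_min·σ²)) · ∑_i |w'_i − w_i|. -/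
open Matrix

lemma trace_prod_nonneg {a b c p q s : ℝ} (ha : 0 ≤ a) (hc : 0 ≤ c)
    (hb : b ^ 2 ≤ a * c) (hp : 0 ≤ p) (hs : 0 ≤ s) (hq : q ^ 2 ≤ p * s) :
    0 ≤ a * p + 2 * b * q + c * s := by
  have hS : 0 ≤ a * p + c * s := by positivity
  have habs : (2*b*q)^2 ≤ (a*p + c*s)^2 := by
    nlinarith [sq_nonneg (a*p - c*s), mul_le_mul hb hq (sq_nonneg q) (mul_nonneg ha hc)]
  nlinarith [hS, habs]

lemma logdet_grad (l a b c e f g : ℝ) (hl : 0 < l)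
    (ha : l ≤ a) (hc : l ≤ c) (hb : b ^ 2 ≤ (a - l) * (c - l))
    (he : l ≤ e) (hg : l ≤ g) (hf : f ^ 2 ≤ (e - l) * (g - l)) :
    Real.log (e * g - f ^ 2) - Real.log (a * c - b ^ 2) ≤
      (c * e - 2 * b * f + a * g) / (a * c - b ^ 2) - 2 := by
  have hdA : 0 < a * c - b ^ 2 := by nlinarith
  have hdB : 0 < e * g - f ^ 2 := by nlinarith
  set dA := a * c - b ^ 2 with hdAdef
  set dB := e * g - f ^ 2 with hdBdef
  set tn := c * e - 2 * b * f + a * g with htndef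
  have ht0 : 0 ≤ tn := by
    have := trace_prod_nonneg (a := c) (b := -b) (c := a) (p := e) (q := f) (s := g)
      (by linarith) (by linarith) (by nlinarith) (by linarith) (by linarith) (by nlinarith)
    linarith [this]
  have key : a^2*(tn^2 - 4*dA*dB) = (2*dA*e - tn*a)^2 + 4*dA*(a*f-b*e)^2 := by
    rw [hdAdef, hdBdef, htndef]; ring
  have hdisc : 4*dA*dB ≤ tn^2 := by
    by_contra hcon
    push_neg at hcon
    have ha0 : 0 < a := lt_of_lt_of_le hl ha
    nlinarith [key, sq_nonneg (2*dA*e - tn*a), mul_nonneg hdA.le (sq_nonneg (a*f-b*e)),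
      mul_pos (mul_pos ha0 ha0) (sub_pos.mpr hcon)]
  have ht : 0 < tn := by
    rcases ht0.lt_or_eq with h | h
    · exact h
    · exfalso; nlinarith [mul_pos hdA hdB]
  set D := Real.sqrt (tn^2 - 4*dA*dB) with hDdef
  have hD2 : D^2 = tn^2 - 4*dA*dB := Real.sq_sqrt (by linarith)
  have hDnn : 0 ≤ D := Real.sqrt_nonneg _
  have hDlt : D < tn := by nlinarith [mul_pos hdA hdB]
  have hl1 : 0 < (tn - D)/(2*dA) := div_pos (by linarith) (by linarith)
  have hl2 : 0 < (tn + D)/(2*dA) := div_pos (by linarith) (by linarith)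
  have hprod : (tn - D)/(2*dA) * ((tn + D)/(2*dA)) = dB/dA := by
    rw [div_mul_div_comm]
    rw [show (tn - D)*(tn + D) = tn^2 - D^2 by ring, hD2]
    field_simp
    ring
  have hlog : Real.log dB - Real.log dA = Real.log ((tn - D)/(2*dA)) + Real.log ((tn + D)/(2*dA)) := by
    rw [← Real.log_mul (ne_of_gt hl1) (ne_of_gt hl2), hprod, Real.log_div (ne_of_gt hdB) (ne_of_gt hdA)]
  rw [hlog]
  have h1 := Real.log_le_sub_one_of_pos hl1
  have h2 := Real.log_le_sub_one_of_pos hl2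
  have hsum : (tn - D)/(2*dA) + (tn + D)/(2*dA) = tn/dA := by
    field_simp; ring
  have : Real.log ((tn - D)/(2*dA)) + Real.log ((tn + D)/(2*dA)) ≤ tn/dA - 2 := by
    rw [← hsum]; linarith
  linarith

lemma trace_bound (l a b c p q s : ℝ) (hl : 0 < l)
    (ha : l ≤ a) (hc : l ≤ c) (hb : b ^ 2 ≤ (a - l) * (c - l))
    (hp : 0 ≤ p) (hs : 0 ≤ s) (hq : q ^ 2 ≤ p * s) :
    0 ≤ c * p - 2 * b * q + a * s ∧
      l * (c * p - 2 * b * q + a * s) ≤ (a * c - b ^ 2) * (p + s) := by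
  constructor
  · have := trace_prod_nonneg (a := c) (b := -b) (c := a) (p := p) (q := q) (s := s)
      (by linarith) (by linarith) (by nlinarith) hp hs hq
    linarith
  · have hdA : 0 < a * c - b ^ 2 := by nlinarith
    have h1 : 0 ≤ a * c - b ^ 2 - l * c := by nlinarith
    have h2 : 0 ≤ a * c - b ^ 2 - l * a := by nlinarith
    have h3 : (l*b)^2 ≤ (a * c - b ^ 2 - l * c) * (a * c - b ^ 2 - l * a) := by nlinarith
    have := trace_prod_nonneg (a := a*c-b^2-l*c) (b := l*b) (c := a*c-b^2-l*a)
      (p := p) (q := q) (s := s) h1 h2 h3 hp hs hq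
    nlinarith [this]

set_option maxHeartbeats 1000000 in
/-- Proposition 3 instantiated with the bearing FIM: with
`M i = ∑ r, (1/(σ²ρ_{r,i}⁴)) • [[δy², −δx δy], [−δx δy, δx²]]`,
`K = max_{r,i} 1/ρ_{r,i}²`, and `F w = ∑ i, w i • M i`, if `F w` and `F w'`
both have smallest eigenvalue at least `λmin > 0`, then
`|log det F w' − log det F w| ≤ (R·K/(λmin·σ²)) * ‖w' − w‖₁`. -/
theorem bearing_fim_logdet_sensitivity
    (N R : ℕ) (hN : 1 ≤ N) (hR : 1 ≤ R)
    (wm g : Fin N → ℝ) (hwm_pos : ∀ i, 0 < wm i) (hwm_sum : ∑ i, wm i = 1)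
    (σ : ℝ) (hσ : 0 < σ) (lmin : ℝ) (hlmin : 0 < lmin)
    (δx δy : Fin R → Fin N → ℝ)
    (hδ : ∀ r i, (δx r i, δy r i) ≠ (0, 0))
    (ρ : Fin R → Fin N → ℝ)
    (hρ : ∀ r i, ρ r i = Real.sqrt (δx r i ^ 2 + δy r i ^ 2))
    (M : Fin N → Matrix (Fin 2) (Fin 2) ℝ)
    (hM : ∀ i, M i = ∑ r, (1 / (σ ^ 2 * ρ r i ^ 4)) •
      !![δy r i ^ 2, -(δx r i * δy r i); -(δx r i * δy r i), δx r i ^ 2])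
    (K : ℝ) (hK : IsGreatest (Set.range fun p : Fin R × Fin N => 1 / ρ p.1 p.2 ^ 2) K)
    (w w' : Fin N → ℝ)
    (hw : (∀ i, 0 ≤ w i) ∧ ∑ i, w i = 1)
    (hw' : (∀ i, 0 ≤ w' i) ∧ ∑ i, w' i = 1)
    (hFw : ∀ x : Fin 2 → ℝ, lmin * (∑ k, x k ^ 2) ≤ x ⬝ᵥ (∑ i, w i • M i).mulVec x)
    (hFw' : ∀ x : Fin 2 → ℝ, lmin * (∑ k, x k ^ 2) ≤ x ⬝ᵥ (∑ i, w' i • M i).mulVec x) :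
    |Real.log (∑ i, w' i • M i).det - Real.log (∑ i, w i • M i).det| ≤
      ((R : ℝ) * K / (lmin * σ ^ 2)) * ∑ i, |w' i - w i| := by
  -- basic positivity
  have hρpos : ∀ r i, 0 < ρ r i := by
    intro r i
    rw [hρ]
    apply Real.sqrt_pos.mpr
    rcases eq_or_ne (δx r i) 0 with h | h
    · have h2 : δy r i ≠ 0 := by
        intro h2; exact hδ r i (by rw [h, h2])
      positivity
    · positivity
  have hρsq : ∀ r i, ρ r i ^ 2 = δx r i ^ 2 + δy r i ^ 2 := by
    intro r i; rw [hρ]; exact Real.sq_sqrt (by positivity)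
  -- entry formulas
  have hM00 : ∀ i, M i 0 0 = ∑ r, (1 / (σ ^ 2 * ρ r i ^ 4)) * δy r i ^ 2 := by
    intro i; rw [hM]; simp [Matrix.sum_apply]
  have hM01 : ∀ i, M i 0 1 = ∑ r, (1 / (σ ^ 2 * ρ r i ^ 4)) * (-(δx r i * δy r i)) := by
    intro i; rw [hM]; simp [Matrix.sum_apply]
  have hM10 : ∀ i, M i 1 0 = M i 0 1 := by
    intro i; rw [hM]; simp [Matrix.sum_apply]
  have hM11 : ∀ i, M i 1 1 = ∑ r, (1 / (σ ^ 2 * ρ r i ^ 4)) * δx r i ^ 2 := by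
    intro i; rw [hM]; simp [Matrix.sum_apply]
  set P : Fin N → ℝ := fun i => M i 0 0 with hPdef
  set Q : Fin N → ℝ := fun i => M i 0 1 with hQdef
  set S : Fin N → ℝ := fun i => M i 1 1 with hSdef
  have hP0 : ∀ i, 0 ≤ P i := by
    intro i; rw [hPdef]; simp only; rw [hM00]
    apply Finset.sum_nonneg; intro r _; positivity
  have hS0 : ∀ i, 0 ≤ S i := by
    intro i; rw [hSdef]; simp only; rw [hM11]
    apply Finset.sum_nonneg; intro r _; positivity
  -- Cauchy-Schwarz : Q i ^ 2 ≤ P i * S i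
  have hQ2 : ∀ i, Q i ^ 2 ≤ P i * S i := by
    intro i
    have hcs := Finset.sum_mul_sq_le_sq_mul_sq Finset.univ
      (fun r => δx r i / (σ * ρ r i ^ 2)) (fun r => δy r i / (σ * ρ r i ^ 2))
    have hu : ∀ r : Fin R, (δx r i / (σ * ρ r i ^ 2)) ^ 2 = (1 / (σ ^ 2 * ρ r i ^ 4)) * δx r i ^ 2 := by
      intro r
      rw [div_pow, show (σ * ρ r i ^ 2) ^ 2 = σ ^ 2 * ρ r i ^ 4 from by ring,
        one_div, inv_mul_eq_div]
    have hv : ∀ r : Fin R, (δy r i / (σ * ρ r i ^ 2)) ^ 2 = (1 / (σ ^ 2 * ρ r i ^ 4)) * δy r i ^ 2 := by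
      intro r
      rw [div_pow, show (σ * ρ r i ^ 2) ^ 2 = σ ^ 2 * ρ r i ^ 4 from by ring,
        one_div, inv_mul_eq_div]
    have huv : ∀ r : Fin R, (δx r i / (σ * ρ r i ^ 2)) * (δy r i / (σ * ρ r i ^ 2)) =
        (1 / (σ ^ 2 * ρ r i ^ 4)) * (δx r i * δy r i) := by
      intro r
      rw [div_mul_div_comm, show (σ * ρ r i ^ 2) * (σ * ρ r i ^ 2) = σ ^ 2 * ρ r i ^ 4 from by ring,
        one_div, inv_mul_eq_div]
    have hQeq : Q i = -∑ r, (δx r i / (σ * ρ r i ^ 2)) * (δy r i / (σ * ρ r i ^ 2)) := by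
      rw [hQdef]; simp only; rw [hM01]
      rw [← Finset.sum_neg_distrib]
      apply Finset.sum_congr rfl; intro r _; rw [huv r]; ring
    have hPeq : P i = ∑ r, (δy r i / (σ * ρ r i ^ 2)) ^ 2 := by
      rw [hPdef]; simp only; rw [hM00]
      apply Finset.sum_congr rfl; intro r _; rw [hv r]
    have hSeq : S i = ∑ r, (δx r i / (σ * ρ r i ^ 2)) ^ 2 := by
      rw [hSdef]; simp only; rw [hM11]
      apply Finset.sum_congr rfl; intro r _; rw [hu r]
    rw [hQeq, hPeq, hSeq, neg_pow]
    calc (-1 : ℝ) ^ 2 * (∑ r, (δx r i / (σ * ρ r i ^ 2)) * (δy r i / (σ * ρ r i ^ 2))) ^ 2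
        = (∑ r, (δx r i / (σ * ρ r i ^ 2)) * (δy r i / (σ * ρ r i ^ 2))) ^ 2 := by ring
      _ ≤ (∑ r, (δx r i / (σ * ρ r i ^ 2)) ^ 2) * ∑ r, (δy r i / (σ * ρ r i ^ 2)) ^ 2 := hcs
      _ = (∑ r, (δy r i / (σ * ρ r i ^ 2)) ^ 2) * ∑ r, (δx r i / (σ * ρ r i ^ 2)) ^ 2 := by ring
  -- trace bound
  have htr : ∀ i, P i + S i ≤ (R : ℝ) * K / σ ^ 2 := by
    intro i
    have : P i + S i = ∑ r : Fin R, (1 / σ ^ 2) * (1 / ρ r i ^ 2) := by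
      rw [hPdef, hSdef]; simp only; rw [hM00, hM11, ← Finset.sum_add_distrib]
      apply Finset.sum_congr rfl; intro r _
      have h1 : σ ≠ 0 := ne_of_gt hσ
      have h2 : ρ r i ≠ 0 := ne_of_gt (hρpos r i)
      have h3 := hρsq r i
      rw [show 1/(σ^2*ρ r i^4) * δy r i^2 + 1/(σ^2*ρ r i^4) * δx r i^2
        = (δx r i^2 + δy r i^2)/(σ^2*ρ r i^4) from by ring, ← h3]
      field_simp
    rw [this]
    calc ∑ r : Fin R, (1 / σ ^ 2) * (1 / ρ r i ^ 2)
        ≤ ∑ r : Fin R, (1 / σ ^ 2) * K := by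
          apply Finset.sum_le_sum; intro r _
          have hKr : 1 / ρ r i ^ 2 ≤ K := hK.2 (Set.mem_range_self (r, i))
          have : (0:ℝ) < 1 / σ ^ 2 := by positivity
          nlinarith
      _ = (R : ℝ) * K / σ ^ 2 := by
          rw [Finset.sum_const, Finset.card_univ, Fintype.card_fin, nsmul_eq_mul]
          field_simp
  -- entries of the FIM matrices
  have hA : ∀ (v : Fin N → ℝ) (j k : Fin 2), (∑ i, v i • M i) j k = ∑ i, v i * M i j k := by
    intro v j k; simp [Matrix.sum_apply]
  have hA10 : ∀ v : Fin N → ℝ, (∑ i, v i • M i) 1 0 = ∑ i, v i * Q i := by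
    intro v; rw [hA]; apply Finset.sum_congr rfl; intro i _; rw [hM10 i]
  have hdet : ∀ v : Fin N → ℝ, (∑ i, v i • M i).det =
      (∑ i, v i * P i) * (∑ i, v i * S i) - (∑ i, v i * Q i) ^ 2 := by
    intro v; rw [Matrix.det_fin_two, hA v 0 0, hA v 0 1, hA10 v, hA v 1 1]
    have e1 : (∑ i, v i * M i 0 0) = ∑ i, v i * P i := rfl
    have e2 : (∑ i, v i * M i 0 1) = ∑ i, v i * Q i := rfl
    have e3 : (∑ i, v i * M i 1 1) = ∑ i, v i * S i := rfl
    rw [e1, e2, e3]; ring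
  have hquad : ∀ (v : Fin N → ℝ),
      (∀ x : Fin 2 → ℝ, lmin * (∑ k, x k ^ 2) ≤ x ⬝ᵥ (∑ i, v i • M i).mulVec x) →
      ∀ x0 x1 : ℝ, lmin * (x0 ^ 2 + x1 ^ 2) ≤
        (∑ i, v i * P i) * x0 ^ 2 + 2 * (∑ i, v i * Q i) * (x0 * x1) + (∑ i, v i * S i) * x1 ^ 2 := by
    intro v hv x0 x1
    have h := hv ![x0, x1]
    have hexp : (![x0,x1] : Fin 2 → ℝ) ⬝ᵥ (∑ i, v i • M i).mulVec ![x0,x1]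
        = (∑ i, v i • M i) 0 0 * x0 ^ 2 + ((∑ i, v i • M i) 0 1 + (∑ i, v i • M i) 1 0) * (x0 * x1)
          + (∑ i, v i • M i) 1 1 * x1 ^ 2 := by
      simp [Matrix.mulVec, dotProduct, Fin.sum_univ_two]; ring
    rw [hexp, Fin.sum_univ_two] at h
    rw [hA v 0 0, hA v 0 1, hA10 v, hA v 1 1] at h
    simp only [Matrix.cons_val_zero, Matrix.cons_val_one, Matrix.head_cons] at h
    have hQQ : (∑ i, v i * M i 0 1) = ∑ i, v i * Q i := rfl
    rw [hQQ] at h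
    nlinarith [h]
  rw [hdet w', hdet w]
  have hq1 := hquad w hFw
  have hq2 := hquad w' hFw'
  clear_value P Q S
  set a1 := ∑ i, w i * P i with ha1def
  set b1 := ∑ i, w i * Q i with hb1def
  set c1 := ∑ i, w i * S i with hc1def
  set a2 := ∑ i, w' i * P i with ha2def
  set b2 := ∑ i, w' i * Q i with hb2def
  set c2 := ∑ i, w' i * S i with hc2def
  clear_value a1 b1 c1 a2 b2 c2
  have ha1 : lmin ≤ a1 := by have := hq1 1 0; nlinarith [this]
  have hc1 : lmin ≤ c1 := by have := hq1 0 1; nlinarith [this]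
  have ha2 : lmin ≤ a2 := by have := hq2 1 0; nlinarith [this]
  have hc2 : lmin ≤ c2 := by have := hq2 0 1; nlinarith [this]
  have hb1 : b1 ^ 2 ≤ (a1 - lmin) * (c1 - lmin) := by
    have hq : ∀ t : ℝ, 0 ≤ (a1 - lmin) * (t * t) + (2 * b1) * t + (c1 - lmin) := by
      intro t; have := hq1 t 1; nlinarith [this]
    have hd := discrim_le_zero hq
    rw [discrim] at hd; nlinarith [hd]
  have hb2 : b2 ^ 2 ≤ (a2 - lmin) * (c2 - lmin) := by
    have hq : ∀ t : ℝ, 0 ≤ (a2 - lmin) * (t * t) + (2 * b2) * t + (c2 - lmin) := by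
      intro t; have := hq2 t 1; nlinarith [this]
    have hd := discrim_le_zero hq
    rw [discrim] at hd; nlinarith [hd]
  have hdApos : 0 < a1 * c1 - b1 ^ 2 := by nlinarith
  have hdBpos : 0 < a2 * c2 - b2 ^ 2 := by nlinarith
  set C := (R : ℝ) * K / (lmin * σ ^ 2) with hCdef
  have hlC : lmin * C = (R : ℝ) * K / σ ^ 2 := by
    rw [hCdef]; field_simp
  have hT1 := fun i => trace_bound lmin a1 b1 c1 (P i) (Q i) (S i) hlmin ha1 hc1 hb1 (hP0 i) (hS0 i) (hQ2 i)
  have hT2 := fun i => trace_bound lmin a2 b2 c2 (P i) (Q i) (S i) hlmin ha2 hc2 hb2 (hP0 i) (hS0 i) (hQ2 i)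
  have hT1ub : ∀ i, c1 * P i - 2 * b1 * Q i + a1 * S i ≤ (a1 * c1 - b1 ^ 2) * C := by
    intro i
    have h1 := (hT1 i).2
    have h2 : (a1 * c1 - b1 ^ 2) * (P i + S i) ≤ (a1 * c1 - b1 ^ 2) * ((R:ℝ) * K / σ ^ 2) :=
      mul_le_mul_of_nonneg_left (htr i) hdApos.le
    rw [← hlC, show (a1 * c1 - b1 ^ 2) * (lmin * C) = lmin * ((a1 * c1 - b1 ^ 2) * C) from by ring] at h2
    exact le_of_mul_le_mul_left (le_trans h1 h2) hlmin
  have hT2ub : ∀ i, c2 * P i - 2 * b2 * Q i + a2 * S i ≤ (a2 * c2 - b2 ^ 2) * C := by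
    intro i
    have h1 := (hT2 i).2
    have h2 : (a2 * c2 - b2 ^ 2) * (P i + S i) ≤ (a2 * c2 - b2 ^ 2) * ((R:ℝ) * K / σ ^ 2) :=
      mul_le_mul_of_nonneg_left (htr i) hdBpos.le
    rw [← hlC, show (a2 * c2 - b2 ^ 2) * (lmin * C) = lmin * ((a2 * c2 - b2 ^ 2) * C) from by ring] at h2
    exact le_of_mul_le_mul_left (le_trans h1 h2) hlmin
  have hsumdiff : ∀ (f : Fin N → ℝ), (∑ i, w' i * f i) - (∑ i, w i * f i) = ∑ i, (w' i - w i) * f i := by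
    intro f; rw [← Finset.sum_sub_distrib]; apply Finset.sum_congr rfl; intros; ring
  rw [abs_sub_le_iff]
  constructor
  · have hgrad := logdet_grad lmin a1 b1 c1 a2 b2 c2 hlmin ha1 hc1 hb1 ha2 hc2 hb2
    have hnum : c1 * a2 - 2 * b1 * b2 + a1 * c2 - 2 * (a1 * c1 - b1 ^ 2)
        = ∑ i, (w' i - w i) * (c1 * P i - 2 * b1 * Q i + a1 * S i) := by
      have hexp : ∑ i, (w' i - w i) * (c1 * P i - 2 * b1 * Q i + a1 * S i)
          = c1 * (∑ i, (w' i - w i) * P i) - 2 * b1 * (∑ i, (w' i - w i) * Q i)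
            + a1 * (∑ i, (w' i - w i) * S i) := by
        rw [Finset.mul_sum, Finset.mul_sum, Finset.mul_sum, ← Finset.sum_sub_distrib,
          ← Finset.sum_add_distrib]
        apply Finset.sum_congr rfl; intros; ring
      rw [hexp, ← hsumdiff P, ← hsumdiff Q, ← hsumdiff S, ← ha1def, ← hb1def, ← hc1def,
        ← ha2def, ← hb2def, ← hc2def]
      ring
    have hsum_le : ∑ i, (w' i - w i) * (c1 * P i - 2 * b1 * Q i + a1 * S i)
        ≤ ((a1 * c1 - b1 ^ 2) * C) * ∑ i, |w' i - w i| := by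
      rw [Finset.mul_sum]
      apply Finset.sum_le_sum
      intro i _
      calc (w' i - w i) * (c1 * P i - 2 * b1 * Q i + a1 * S i)
          ≤ |w' i - w i| * (c1 * P i - 2 * b1 * Q i + a1 * S i) :=
            mul_le_mul_of_nonneg_right (le_abs_self _) (hT1 i).1
        _ ≤ |w' i - w i| * ((a1 * c1 - b1 ^ 2) * C) :=
            mul_le_mul_of_nonneg_left (hT1ub i) (abs_nonneg _)
        _ = (a1 * c1 - b1 ^ 2) * C * |w' i - w i| := by ring
    have hfinal : (c1 * a2 - 2 * b1 * b2 + a1 * c2) / (a1 * c1 - b1 ^ 2) - 2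
        ≤ C * ∑ i, |w' i - w i| := by
      rw [show (c1 * a2 - 2 * b1 * b2 + a1 * c2) / (a1 * c1 - b1 ^ 2) - 2
        = (c1 * a2 - 2 * b1 * b2 + a1 * c2 - 2 * (a1 * c1 - b1 ^ 2)) / (a1 * c1 - b1 ^ 2) from by
          rw [eq_div_iff (ne_of_gt hdApos), sub_mul, div_mul_cancel₀ _ (ne_of_gt hdApos)]]
      rw [hnum, div_le_iff₀ hdApos]
      calc ∑ i, (w' i - w i) * (c1 * P i - 2 * b1 * Q i + a1 * S i)
          ≤ ((a1 * c1 - b1 ^ 2) * C) * ∑ i, |w' i - w i| := hsum_le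
        _ = C * (∑ i, |w' i - w i|) * (a1 * c1 - b1 ^ 2) := by ring
    linarith [hgrad, hfinal]
  · have hgrad := logdet_grad lmin a2 b2 c2 a1 b1 c1 hlmin ha2 hc2 hb2 ha1 hc1 hb1
    have hnum : c2 * a1 - 2 * b2 * b1 + a2 * c1 - 2 * (a2 * c2 - b2 ^ 2)
        = ∑ i, (w i - w' i) * (c2 * P i - 2 * b2 * Q i + a2 * S i) := by
      have hexp : ∑ i, (w i - w' i) * (c2 * P i - 2 * b2 * Q i + a2 * S i)
          = c2 * (∑ i, (w i - w' i) * P i) - 2 * b2 * (∑ i, (w i - w' i) * Q i)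
            + a2 * (∑ i, (w i - w' i) * S i) := by
        rw [Finset.mul_sum, Finset.mul_sum, Finset.mul_sum, ← Finset.sum_sub_distrib,
          ← Finset.sum_add_distrib]
        apply Finset.sum_congr rfl; intros; ring
      have hsd : ∀ (f : Fin N → ℝ), (∑ i, w i * f i) - (∑ i, w' i * f i) = ∑ i, (w i - w' i) * f i := by
        intro f; rw [← Finset.sum_sub_distrib]; apply Finset.sum_congr rfl; intros; ring
      rw [hexp, ← hsd P, ← hsd Q, ← hsd S, ← ha1def, ← hb1def, ← hc1def,
        ← ha2def, ← hb2def, ← hc2def]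
      ring
    have hsum_le : ∑ i, (w i - w' i) * (c2 * P i - 2 * b2 * Q i + a2 * S i)
        ≤ ((a2 * c2 - b2 ^ 2) * C) * ∑ i, |w' i - w i| := by
      rw [Finset.mul_sum]
      apply Finset.sum_le_sum
      intro i _
      calc (w i - w' i) * (c2 * P i - 2 * b2 * Q i + a2 * S i)
          ≤ |w i - w' i| * (c2 * P i - 2 * b2 * Q i + a2 * S i) :=
            mul_le_mul_of_nonneg_right (le_abs_self _) (hT2 i).1
        _ ≤ |w i - w' i| * ((a2 * c2 - b2 ^ 2) * C) :=
            mul_le_mul_of_nonneg_left (hT2ub i) (abs_nonneg _)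
        _ = (a2 * c2 - b2 ^ 2) * C * |w' i - w i| := by rw [abs_sub_comm]; ring
    have hfinal : (c2 * a1 - 2 * b2 * b1 + a2 * c1) / (a2 * c2 - b2 ^ 2) - 2
        ≤ C * ∑ i, |w' i - w i| := by
      rw [show (c2 * a1 - 2 * b2 * b1 + a2 * c1) / (a2 * c2 - b2 ^ 2) - 2
        = (c2 * a1 - 2 * b2 * b1 + a2 * c1 - 2 * (a2 * c2 - b2 ^ 2)) / (a2 * c2 - b2 ^ 2) from by
          rw [eq_div_iff (ne_of_gt hdBpos), sub_mul, div_mul_cancel₀ _ (ne_of_gt hdBpos)]]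
      rw [hnum, div_le_iff₀ hdBpos]
      calc ∑ i, (w i - w' i) * (c2 * P i - 2 * b2 * Q i + a2 * S i)
          ≤ ((a2 * c2 - b2 ^ 2) * C) * ∑ i, |w' i - w i| := hsum_le
        _ = C * (∑ i, |w' i - w i|) * (a2 * c2 - b2 ^ 2) := by ring
    linarith [hgrad, hfinal]
end
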